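/- arXiv:1408.3779 — 2 statements merged into one kernel-verified Lean document; each statement's English description precedes it below -/
import Mathlib

section
/- Let g, u, h₋, Γ, η be as follows: g = q², u = (q')² − tg − g² for q a nonvanishing twice-differentiable solution of q'' = 2q³ + tq with u nonvanishing; h₋ twice differentiable satisfying 9h₋'' + 9(h₋ + g/u)h₋' + h₋³ + 3(g/u)h₋² − (3g'/u + 12g + 4t)h₋ − 8g' − 6g²/u = 0; Γ = g/u − u and η = h₋ + g/u. Then 9η'' + 9ηη' + η³ − 4(3Γ' + t)η − 8Γ'' − 2 = 0. -/
/-- `g = q²` for a nonvanishing Painlevé II solution `q`. -/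
def PIIg (q : ℝ → ℝ) : ℝ → ℝ := fun t => q t ^ 2

/-- The Painlevé II Hamiltonian `u = (q')² - tq² - q⁴` (with `q'` an explicit
derivative function). -/
def PIIu (q q' : ℝ → ℝ) : ℝ → ℝ := fun t => q' t ^ 2 - t * q t ^ 2 - q t ^ 4

/-!
Write `r = g/u`. Along a Painlevé II solution the Hamiltonian satisfies `u' = -g`, so `r`
obeys `r' = g'/u + r²` and, since `g'' = 6g² + 4tg + 2u`,
`r'' = 3gg'/u² + 2r³ + 6g²/u + 4tg/u + 2`. With `η = h₋ + r`, `Γ' = r' + g` and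
`Γ'' = r'' + g'`, the equation for `η` becomes the equation for `h₋` term by term.
-/

section QuotientByNegAntiderivative

variable {g dg u : ℝ → ℝ} {d2g t : ℝ}

theorem hasDerivAt_div_of_hasDerivAt_neg (hg : HasDerivAt g (dg t) t)
    (hu : HasDerivAt u (-g t) t) (hu0 : u t ≠ 0) :
    HasDerivAt (fun s => g s / u s) (dg t / u t + (g t / u t) ^ 2) t :=
  (hg.fun_div hu hu0).congr_deriv (by field_simp; ring)

theorem hasDerivAt_deriv_div_of_hasDerivAt_neg (hg : HasDerivAt g (dg t) t)
    (hdg : HasDerivAt dg d2g t) (hu : HasDerivAt u (-g t) t) (hu0 : u t ≠ 0) :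
    HasDerivAt (fun s => dg s / u s + (g s / u s) ^ 2)
      (d2g / u t + 3 * g t * dg t / u t ^ 2 + 2 * (g t / u t) ^ 3) t :=
  ((hdg.fun_div hu hu0).fun_add
    ((hasDerivAt_div_of_hasDerivAt_neg hg hu hu0).fun_pow 2)).congr_deriv
    (by norm_num; field_simp; ring)

end QuotientByNegAntiderivative

section PainleveII

variable {q q' q'' : ℝ → ℝ} {t : ℝ}

theorem hasDerivAt_PIIg (hq : HasDerivAt q (q' t) t) :
    HasDerivAt (PIIg q) (2 * q t * q' t) t :=
  (hq.fun_pow 2).congr_deriv (by ring)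

theorem hasDerivAt_PIIu (hq : HasDerivAt q (q' t) t) (hq' : HasDerivAt q' (q'' t) t)
    (hPII : q'' t = 2 * q t ^ 3 + t * q t) :
    HasDerivAt (PIIu q q') (-PIIg q t) t :=
  (((hq'.fun_pow 2).fun_sub ((hasDerivAt_id' t).fun_mul (hq.fun_pow 2))).fun_sub
    (hq.fun_pow 4)).congr_deriv (by simp only [PIIg, hPII]; ring)

theorem hasDerivAt_PIIg_deriv (hq : HasDerivAt q (q' t) t)
    (hq' : HasDerivAt q' (q'' t) t) (hPII : q'' t = 2 * q t ^ 3 + t * q t) :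
    HasDerivAt (fun s => 2 * q s * q' s)
      (6 * PIIg q t ^ 2 + 4 * t * PIIg q t + 2 * PIIu q q' t) t :=
  ((hq.const_mul 2).fun_mul hq').congr_deriv (by simp only [PIIg, PIIu, hPII]; ring)

theorem hasDerivAt_PIIg_div_PIIu (hq : HasDerivAt q (q' t) t)
    (hq' : HasDerivAt q' (q'' t) t) (hPII : q'' t = 2 * q t ^ 3 + t * q t)
    (hu0 : PIIu q q' t ≠ 0) :
    HasDerivAt (fun s => PIIg q s / PIIu q q' s)
      (2 * q t * q' t / PIIu q q' t + (PIIg q t / PIIu q q' t) ^ 2) t :=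
  hasDerivAt_div_of_hasDerivAt_neg (dg := fun s => 2 * q s * q' s) (hasDerivAt_PIIg hq)
    (hasDerivAt_PIIu hq hq' hPII) hu0

theorem hasDerivAt_deriv_PIIg_div_PIIu (hq : HasDerivAt q (q' t) t)
    (hq' : HasDerivAt q' (q'' t) t) (hPII : q'' t = 2 * q t ^ 3 + t * q t)
    (hu0 : PIIu q q' t ≠ 0) :
    HasDerivAt (fun s => 2 * q s * q' s / PIIu q q' s + (PIIg q s / PIIu q q' s) ^ 2)
      (3 * PIIg q t * (2 * q t * q' t) / PIIu q q' t ^ 2 + 2 * (PIIg q t / PIIu q q' t) ^ 3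
        + 6 * PIIg q t ^ 2 / PIIu q q' t + 4 * t * PIIg q t / PIIu q q' t + 2) t :=
  (hasDerivAt_deriv_div_of_hasDerivAt_neg (dg := fun s => 2 * q s * q' s)
    (hasDerivAt_PIIg hq) (hasDerivAt_PIIg_deriv hq hq' hPII)
    (hasDerivAt_PIIu hq hq' hPII) hu0).congr_deriv (by field_simp; ring)

end PainleveII

theorem stmt_14_general (q q' q'' hm : ℝ → ℝ)
    (hq : ∀ t, HasDerivAt q (q' t) t)
    (hq' : ∀ t, HasDerivAt q' (q'' t) t)
    (hPII : ∀ t, q'' t = 2 * q t ^ 3 + t * q t)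
    (hune : ∀ t, PIIu q q' t ≠ 0)
    (hmd : Differentiable ℝ hm) (hm2 : Differentiable ℝ (deriv hm))
    (hODE : ∀ t, 9 * deriv (deriv hm) t
      + 9 * (hm t + PIIg q t / PIIu q q' t) * deriv hm t
      + hm t ^ 3 + 3 * (PIIg q t / PIIu q q' t) * hm t ^ 2
      - (3 * deriv (PIIg q) t / PIIu q q' t + 12 * PIIg q t + 4 * t) * hm t
      - 8 * deriv (PIIg q) t - 6 * (PIIg q t) ^ 2 / PIIu q q' t = 0) :
    ∀ t, 9 * deriv (deriv (fun s => hm s + PIIg q s / PIIu q q' s)) t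
      + 9 * (hm t + PIIg q t / PIIu q q' t)
          * deriv (fun s => hm s + PIIg q s / PIIu q q' s) t
      + (hm t + PIIg q t / PIIu q q' t) ^ 3
      - 4 * (3 * deriv (fun s => PIIg q s / PIIu q q' s - PIIu q q' s) t + t)
          * (hm t + PIIg q t / PIIu q q' t)
      - 8 * deriv (deriv (fun s => PIIg q s / PIIu q q' s - PIIu q q' s)) t
      - 2 = 0 := by
  have hr s := hasDerivAt_PIIg_div_PIIu (hq s) (hq' s) (hPII s) (hune s)
  have hr' s := hasDerivAt_deriv_PIIg_div_PIIu (hq s) (hq' s) (hPII s) (hune s)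
  have hη : deriv (fun s => hm s + PIIg q s / PIIu q q' s) = fun s =>
      deriv hm s + (2 * q s * q' s / PIIu q q' s + (PIIg q s / PIIu q q' s) ^ 2) :=
    funext fun s => ((hmd s).hasDerivAt.fun_add (hr s)).deriv
  have hΓ : deriv (fun s => PIIg q s / PIIu q q' s - PIIu q q' s) = fun s =>
      2 * q s * q' s / PIIu q q' s + (PIIg q s / PIIu q q' s) ^ 2 + PIIg q s :=
    funext fun s =>
      ((hr s).fun_sub (hasDerivAt_PIIu (hq s) (hq' s) (hPII s))).deriv.trans (sub_neg_eq_add _ _)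
  intro t
  have hg := hasDerivAt_PIIg (hq t)
  rw [hη, hΓ, ((hm2 t).hasDerivAt.fun_add (hr' t)).deriv, ((hr' t).fun_add hg).deriv]
  have h := hODE t
  rw [hg.deriv] at h
  linear_combination h

/-- Passage from equation (4.25) for `h₋` to the simplest form (4.28)=(1.14)
of the second-order ODE: with `Γ = g/u - u` and `η = h₋ + g/u`,
`9η'' + 9ηη' + η³ - 4(3Γ' + t)η - 8Γ'' - 2 = 0`. -/
theorem stmt_14 (q q' q'' hm : ℝ → ℝ)
    (hq : ∀ t, HasDerivAt q (q' t) t)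
    (hq' : ∀ t, HasDerivAt q' (q'' t) t)
    (hPII : ∀ t, q'' t = 2 * q t ^ 3 + t * q t)
    (hqne : ∀ t, q t ≠ 0)
    (hune : ∀ t, PIIu q q' t ≠ 0)
    (hmd : Differentiable ℝ hm) (hm2 : Differentiable ℝ (deriv hm))
    (hODE : ∀ t, 9 * deriv (deriv hm) t
      + 9 * (hm t + PIIg q t / PIIu q q' t) * deriv hm t
      + hm t ^ 3 + 3 * (PIIg q t / PIIu q q' t) * hm t ^ 2
      - (3 * deriv (PIIg q) t / PIIu q q' t + 12 * PIIg q t + 4 * t) * hm t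
      - 8 * deriv (PIIg q) t - 6 * (PIIg q t) ^ 2 / PIIu q q' t = 0) :
    ∀ t, 9 * deriv (deriv (fun s => hm s + PIIg q s / PIIu q q' s)) t
      + 9 * (hm t + PIIg q t / PIIu q q' t)
          * deriv (fun s => hm s + PIIg q s / PIIu q q' s) t
      + (hm t + PIIg q t / PIIu q q' t) ^ 3
      - 4 * (3 * deriv (fun s => PIIg q s / PIIu q q' s - PIIu q q' s) t + t)
          * (hm t + PIIg q t / PIIu q q' t)
      - 8 * deriv (deriv (fun s => PIIg q s / PIIu q q' s - PIIu q q' s)) t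
      - 2 = 0 :=
  stmt_14_general q q' q'' hm hq hq' hPII hune hmd hm2 hODE
end

section
/- Let q be a twice differentiable nonvanishing function with q'' = 2q³ + tq, r = −q'/q, u = (q')² − tq² − q⁴, and u_r = −(r')²/2 + r⁴/2 − tr² − r. Then u_r = 2u + q'/q − t²/2. -/
/-! The logarithmic derivative `r = -q'/q` of a Painlevé II solution satisfies the Riccati
equation `r' = r² - t - 2q²`. Substituting it into `u_r` leaves a polynomial identity in
`q`, `q'/q` and `t`, once `r²q² = (q')²` is used. -/

theorem hasDerivAt_neg_div_of_painleveII {q q' : ℝ → ℝ} {q'' t : ℝ}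
    (hq : HasDerivAt q (q' t) t) (hq' : HasDerivAt q' q'' t)
    (hPII : q'' = 2 * q t ^ 3 + t * q t) (hne : q t ≠ 0) :
    HasDerivAt (fun s => -(q' s / q s)) ((q' t / q t) ^ 2 - t - 2 * q t ^ 2) t := by
  refine (hq'.div hq hne).neg.congr_deriv ?_
  rw [hPII]
  field_simp
  ring

/-- Identity (4.15): for a nonvanishing Painlevé II solution `q` with
`r = -q'/q`, `u = (q')² - tq² - q⁴`, and
`u_r = -(r')²/2 + r⁴/2 - tr² - r`, one has `u_r = 2u + q'/q - t²/2`. -/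
theorem stmt_17 (q q' q'' : ℝ → ℝ)
    (hq : ∀ t, HasDerivAt q (q' t) t)
    (hq' : ∀ t, HasDerivAt q' (q'' t) t)
    (hPII : ∀ t, q'' t = 2 * q t ^ 3 + t * q t)
    (hne : ∀ t, q t ≠ 0) :
    ∀ t, -(deriv (fun s => -(q' s / q s)) t) ^ 2 / 2
        + (-(q' t / q t)) ^ 4 / 2 - t * (-(q' t / q t)) ^ 2 - (-(q' t / q t))
      = 2 * (q' t ^ 2 - t * q t ^ 2 - q t ^ 4) + q' t / q t - t ^ 2 / 2 := by
  intro t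
  rw [(hasDerivAt_neg_div_of_painleveII (hq t) (hq' t) (hPII t) (hne t)).deriv]
  have hq't : q' t = q' t / q t * q t := (div_mul_cancel₀ _ (hne t)).symm
  set r := q' t / q t
  rw [hq't]
  ring
end
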